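/- Let n₇ be the Lie algebra structure on ℝ⁷ with nonzero brackets [e₁,e₂] = 4 e₄, [e₁,e₇] = −2 e₆, [e₂,e₇] = −2 e₅, [e₅,e₇] = −√6 e₃, [e₆,e₇] = −√6 e₄. Let φ₇ = e^{127}+e^{135}−e^{146}−e^{236}−e^{245}+e^{347}+e^{567}, τ₇ = −2e^{15} + 2e^{26} − √6 e^{36} + √6 e^{45} − 4e^{47}, λ = 54, and let D be the endomorphism with De₁ = −12e₁ − 2√6 e₄, De₂ = −12e₂ − 2√6 e₃, De₃ = −24e₃, De₄ = −24e₄, De₅ = −18e₅, De₆ = −18e₆, De₇ = −4√6 e₅ − 6e₇. Then: (i) dφ₇ = 0; (ii) D is a derivation of n₇; (iii) dτ₇ = 24e^{127} − 4√6 e^{125} − 2√6 e^{137} + 2√6 e^{247} + 12e^{567}; and (iv) λφ₇ + L_D φ₇ = 24e^{127} − 4√6 e^{125} − 2√6 e^{137} + 2√6 e^{247} + 12e^{567}. Hence dτ₇ = λφ₇ + L_D φ₇, i.e. (n₇, φ₇) is an expanding semi-algebraic Laplacian soliton, since dτ₇ = Δ_{φ₇} φ₇. -/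

import Mathlib

noncomputable section

/-- `ℝ⁷` with its standard basis. -/
abbrev V7 := Fin 7 → ℝ

/-- `e^{i₁…i_k}`, the wedge of dual-basis covectors, in the determinant convention:
`(e^{i₁}∧…∧e^{i_k})(X₁,…,X_k) = det (Xₚ)_{i_q}`. -/
def wE {k : ℕ} (idx : Fin k → Fin 7) (X : Fin k → V7) : ℝ :=
  Matrix.det (Matrix.of fun p q : Fin k => X p (idx q))

/-- The index in `{0, …, k}` of the `m`-th element (0-based) of `{0, …, k} \ {i, j}`,
assuming `i < j`. -/
def skip2 (i j m : ℕ) : ℕ := if m < i then m else if m < j - 1 then m + 1 else m + 2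

/-- The Chevalley–Eilenberg differential of a `k`-form `ψ` with respect to a bracket `br`:
`dψ(X₁,…,X_{k+1}) = Σ_{i<j} (−1)^{i+j} ψ([Xᵢ,Xⱼ], X₁,…,X̂ᵢ,…,X̂ⱼ,…,X_{k+1})`. -/
def CEd {V : Type*} (br : V → V → V) {k : ℕ} (ψ : (Fin k → V) → ℝ)
    (X : Fin (k + 1) → V) : ℝ :=
  ∑ i : Fin (k + 1), ∑ j : Fin (k + 1),
    if (i : ℕ) < (j : ℕ) then
      (-1 : ℝ) ^ ((i : ℕ) + (j : ℕ)) *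
        ψ (fun l => if (l : ℕ) = 0 then br (X i) (X j)
          else X ⟨min (skip2 (i : ℕ) (j : ℕ) ((l : ℕ) - 1)) k,
            Nat.lt_succ_of_le (Nat.min_le_right _ _)⟩)
    else 0

/-- The algebraic Lie derivative of a `k`-form with respect to an endomorphism `D`:
`(L_D ψ)(X₁,…,X_k) = ψ(DX₁,X₂,…,X_k) + … + ψ(X₁,…,X_{k−1},DX_k)`. -/
def LD {V : Type*} (D : V → V) {k : ℕ} (ψ : (Fin k → V) → ℝ) (X : Fin k → V) : ℝ :=
  ∑ i : Fin k, ψ (Function.update X i (D (X i)))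

/-- The Lie bracket of `n₇`: `[e₁,e₂] = 4 e₄`, `[e₁,e₇] = −2 e₆`, `[e₂,e₇] = −2 e₅`,
`[e₅,e₇] = −√6 e₃`, `[e₆,e₇] = −√6 e₄`. -/
def br7 (X Y : V7) : V7 :=
  ![0, 0, -Real.sqrt 6 * (X 4 * Y 6 - X 6 * Y 4),
    4 * (X 0 * Y 1 - X 1 * Y 0) - Real.sqrt 6 * (X 5 * Y 6 - X 6 * Y 5),
    -2 * (X 1 * Y 6 - X 6 * Y 1), -2 * (X 0 * Y 6 - X 6 * Y 0), 0]

/-- `φ₇ = e^{127}+e^{135}−e^{146}−e^{236}−e^{245}+e^{347}+e^{567}`. -/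
def phi7 : (Fin 3 → V7) → ℝ := fun X =>
  wE ![0, 1, 6] X + wE ![0, 2, 4] X - wE ![0, 3, 5] X - wE ![1, 2, 5] X
    - wE ![1, 3, 4] X + wE ![2, 3, 6] X + wE ![4, 5, 6] X

/-- `τ₇ = −2e^{15} + 2e^{26} − √6 e^{36} + √6 e^{45} − 4e^{47}`. -/
def tau7 : (Fin 2 → V7) → ℝ := fun X =>
  -2 * wE ![0, 4] X + 2 * wE ![1, 5] X - Real.sqrt 6 * wE ![2, 5] X
    + Real.sqrt 6 * wE ![3, 4] X - 4 * wE ![3, 6] X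

/-- `De₁ = −12e₁ − 2√6 e₄`, `De₂ = −12e₂ − 2√6 e₃`, `De₃ = −24e₃`, `De₄ = −24e₄`,
`De₅ = −18e₅`, `De₆ = −18e₆`, `De₇ = −4√6 e₅ − 6e₇`. -/
def D7 (X : V7) : V7 :=
  ![-12 * X 0, -12 * X 1, -2 * Real.sqrt 6 * X 1 - 24 * X 2,
    -2 * Real.sqrt 6 * X 0 - 24 * X 3, -18 * X 4 - 4 * Real.sqrt 6 * X 6, -18 * X 5,
    -6 * X 6]

/-!
Once the Chevalley–Eilenberg differential, the Lie derivative and the wedge products are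
expanded in closed form for 2- and 3-forms, each claim becomes a polynomial identity in the
coordinates of the arguments and `√6`; the only further input is `√6 ^ 2 = 6`, which enters `dτ₇`.
-/

section ChevalleyEilenberg

variable {V : Type*}

theorem fun_ite_val_eq_zero_eq_cons {n : ℕ} (a : V) (f : Fin (n + 1) → V) :
    (fun l : Fin (n + 1) => if (l : ℕ) = 0 then a else f l) = Fin.cons a (fun m => f m.succ) := by
  ext l
  cases l using Fin.cases <;> simp

theorem fin_cons_eq_vec2 (a : V) (t : Fin 1 → V) : (Fin.cons a t : Fin 2 → V) = ![a, t 0] := by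
  ext l
  fin_cases l <;> rfl

theorem fin_cons_eq_vec3 (a : V) (t : Fin 2 → V) :
    (Fin.cons a t : Fin 3 → V) = ![a, t 0, t 1] := by
  ext l
  fin_cases l <;> rfl

variable (br : V → V → V)

theorem CEd_fin_two (ψ : (Fin 2 → V) → ℝ) (X : Fin 3 → V) :
    CEd br ψ X = -ψ ![br (X 0) (X 1), X 2] + ψ ![br (X 0) (X 2), X 1]
      - ψ ![br (X 1) (X 2), X 0] := by
  simp only [CEd, fun_ite_val_eq_zero_eq_cons, fin_cons_eq_vec2]
  simp [Fin.sum_univ_succ, skip2, sub_eq_add_neg, add_assoc, pow_succ]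

theorem CEd_fin_three (ψ : (Fin 3 → V) → ℝ) (X : Fin 4 → V) :
    CEd br ψ X = -ψ ![br (X 0) (X 1), X 2, X 3] + ψ ![br (X 0) (X 2), X 1, X 3]
      - ψ ![br (X 0) (X 3), X 1, X 2] - ψ ![br (X 1) (X 2), X 0, X 3]
      + ψ ![br (X 1) (X 3), X 0, X 2] - ψ ![br (X 2) (X 3), X 0, X 1] := by
  simp only [CEd, fun_ite_val_eq_zero_eq_cons, fin_cons_eq_vec3]
  simp [Fin.sum_univ_succ, skip2, sub_eq_add_neg, add_assoc, pow_succ]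

end ChevalleyEilenberg

theorem LD_fin_three {V : Type*} (D : V → V) (ψ : (Fin 3 → V) → ℝ) (X : Fin 3 → V) :
    LD D ψ X = ψ ![D (X 0), X 1, X 2] + ψ ![X 0, D (X 1), X 2] + ψ ![X 0, X 1, D (X 2)] := by
  simp only [LD, Fin.sum_univ_three]
  congr 2 <;> congr 1 <;> ext l <;> fin_cases l <;> rfl

theorem wE_fin_two (idx : Fin 2 → Fin 7) (X : Fin 2 → V7) :
    wE idx X = X 0 (idx 0) * X 1 (idx 1) - X 0 (idx 1) * X 1 (idx 0) :=
  Matrix.det_fin_two _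

theorem wE_fin_three (idx : Fin 3 → Fin 7) (X : Fin 3 → V7) :
    wE idx X = X 0 (idx 0) * X 1 (idx 1) * X 2 (idx 2) - X 0 (idx 0) * X 1 (idx 2) * X 2 (idx 1)
      - X 0 (idx 1) * X 1 (idx 0) * X 2 (idx 2) + X 0 (idx 1) * X 1 (idx 2) * X 2 (idx 0)
      + X 0 (idx 2) * X 1 (idx 0) * X 2 (idx 1) - X 0 (idx 2) * X 1 (idx 1) * X 2 (idx 0) :=
  Matrix.det_fin_three _

theorem CEd_br7_phi7 : CEd br7 phi7 = fun _ => (0 : ℝ) := by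
  funext X
  simp only [CEd_fin_three, phi7, wE_fin_three, br7, Matrix.cons_val_zero, Matrix.cons_val_one,
    Matrix.cons_val]
  ring

theorem D7_map_br7 (X Y : V7) : D7 (br7 X Y) = br7 (D7 X) Y + br7 X (D7 Y) := by
  ext i
  fin_cases i <;>
    simp only [D7, br7, Pi.add_apply, Fin.reduceFinMk, Matrix.cons_val_zero, Matrix.cons_val_one,
      Matrix.cons_val] <;>
    ring

/-- `Δ_{φ₇} φ₇ = 24e^{127} − 4√6 e^{125} − 2√6 e^{137} + 2√6 e^{247} + 12e^{567}`. -/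
def laplacianPhi7 : (Fin 3 → V7) → ℝ := fun X =>
  24 * wE ![0, 1, 6] X - 4 * Real.sqrt 6 * wE ![0, 1, 4] X
    - 2 * Real.sqrt 6 * wE ![0, 2, 6] X + 2 * Real.sqrt 6 * wE ![1, 3, 6] X
    + 12 * wE ![4, 5, 6] X

theorem CEd_br7_tau7 : CEd br7 tau7 = laplacianPhi7 := by
  funext X
  simp only [CEd_fin_two, tau7, laplacianPhi7, wE_fin_two, wE_fin_three, br7,
    Matrix.cons_val_zero, Matrix.cons_val_one, Matrix.cons_val]
  ring_nf
  rw [Real.sq_sqrt (by norm_num)]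
  ring

theorem mul_phi7_add_LD_D7_phi7 :
    (fun X => 54 * phi7 X + LD D7 phi7 X) = laplacianPhi7 := by
  funext X
  simp only [LD_fin_three, phi7, laplacianPhi7, wE_fin_three, D7, Matrix.cons_val_zero,
    Matrix.cons_val_one, Matrix.cons_val]
  ring

/-- `(n₇, φ₇)` is an expanding semi-algebraic Laplacian soliton with `λ = 54`:
(i) `dφ₇ = 0`; (ii) `D` is a derivation;
(iii) `dτ₇ = 24e^{127} − 4√6 e^{125} − 2√6 e^{137} + 2√6 e^{247} + 12e^{567}`;
(iv) `λφ₇ + L_D φ₇` equals the same 3-form; hence `dτ₇ = λφ₇ + L_D φ₇` with `λ > 0`. -/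
theorem n7_semialgebraic_soliton :
    (CEd br7 phi7 = fun _ => (0 : ℝ)) ∧
      (∀ X Y : V7, D7 (br7 X Y) = br7 (D7 X) Y + br7 X (D7 Y)) ∧
      (CEd br7 tau7 = fun X =>
        24 * wE ![0, 1, 6] X - 4 * Real.sqrt 6 * wE ![0, 1, 4] X
          - 2 * Real.sqrt 6 * wE ![0, 2, 6] X + 2 * Real.sqrt 6 * wE ![1, 3, 6] X
          + 12 * wE ![4, 5, 6] X) ∧
      ((fun X => 54 * phi7 X + LD D7 phi7 X) = fun X =>
        24 * wE ![0, 1, 6] X - 4 * Real.sqrt 6 * wE ![0, 1, 4] X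
          - 2 * Real.sqrt 6 * wE ![0, 2, 6] X + 2 * Real.sqrt 6 * wE ![1, 3, 6] X
          + 12 * wE ![4, 5, 6] X) ∧
      (CEd br7 tau7 = fun X => 54 * phi7 X + LD D7 phi7 X) ∧
      (0 : ℝ) < 54 := by
  exact ⟨CEd_br7_phi7, D7_map_br7, CEd_br7_tau7, mul_phi7_add_LD_D7_phi7,
    CEd_br7_tau7.trans mul_phi7_add_LD_D7_phi7.symm, by norm_num⟩
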